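/- arXiv:1105.0051 — 9 statements merged into one kernel-verified Lean document; each statement's English description precedes it below -/
import Mathlib

section
/- Under the regularity constraints on the cost terms, the conditional risk of decision 1 is strictly smaller than the conditional risks of both decision 2 and the reject decision 3 if and only if q1/q2 > (λ21 − λ23)/(λ13 − λ11). (This is the 'decide y1' clause of the general decision rule for abstaining Bayesian classifiers, Theorem 1, eq. (6a).) -/
/-!
Comparing two decisions with risks `a q₁ + b q₂` and `c q₁ + d q₂`, where `a < c`, is
comparing the likelihood ratio `q₁ / q₂` with the threshold `(b - d) / (c - a)`. Decision 1
beats the reject decision above the threshold `(λ21 − λ23)/(λ13 − λ11)` and beats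
decision 2 above `(λ21 − λ22)/(λ12 − λ11)`; the regularity constraints put the second
threshold below the first, so the first comparison already implies the second.
-/

theorem add_mul_lt_add_mul_iff_div_lt_div {a b c d q₁ q₂ : ℝ} (hac : a < c) (hq₂ : 0 < q₂) :
    a * q₁ + b * q₂ < c * q₁ + d * q₂ ↔ (b - d) / (c - a) < q₁ / q₂ := by
  rw [div_lt_div_iff₀ (sub_pos.2 hac) hq₂]
  constructor <;> intro h <;> linarith

theorem decide_y1_iff_general
    (q1 q2 : ℝ) (hq2 : 0 < q2)
    (l11 l12 l13 l21 l22 l23 : ℝ)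
    (h1 : l11 < l13) (h2 : l13 < l12)
    (h5 : (l21 - l22) / (l12 - l11) < (l21 - l23) / (l13 - l11)) :
    (l11 * q1 + l21 * q2 < l12 * q1 + l22 * q2 ∧
     l11 * q1 + l21 * q2 < l13 * q1 + l23 * q2) ↔
    q1 / q2 > (l21 - l23) / (l13 - l11) := by
  rw [add_mul_lt_add_mul_iff_div_lt_div (h1.trans h2) hq2,
    add_mul_lt_add_mul_iff_div_lt_div h1 hq2, gt_iff_lt]
  exact and_iff_right_of_imp h5.trans

/-- Theorem 1, eq. (6a): under the regularity constraints on the cost terms,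
decision 1 has strictly smaller conditional risk than both decision 2 and the
reject decision 3 iff the posterior ratio exceeds `(λ21 − λ23)/(λ13 − λ11)`. -/
theorem decide_y1_iff
    (q1 q2 : ℝ) (hq1 : 0 < q1) (hq2 : 0 < q2) (hq : q1 + q2 = 1)
    (l11 l12 l13 l21 l22 l23 : ℝ)
    (h1 : l11 < l13) (h2 : l13 < l12)
    (h3 : 0 < (l23 - l22) / (l12 - l13))
    (h4 : (l23 - l22) / (l12 - l13) < (l21 - l22) / (l12 - l11))
    (h5 : (l21 - l22) / (l12 - l11) < (l21 - l23) / (l13 - l11)) :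
    (l11 * q1 + l21 * q2 < l12 * q1 + l22 * q2 ∧
     l11 * q1 + l21 * q2 < l13 * q1 + l23 * q2) ↔
    q1 / q2 > (l21 - l23) / (l13 - l11) :=
  decide_y1_iff_general q1 q2 hq2 l11 l12 l13 l21 l22 l23 h1 h2 h5
end

section
/- Under the regularity constraints on the cost terms, the conditional risk of decision 2 is less than or equal to the conditional risks of both decision 1 and the reject decision 3 if and only if q1/q2 ≤ (λ23 − λ22)/(λ12 − λ13). (This is the 'decide y2' clause of the general decision rule for abstaining Bayesian classifiers, Theorem 1, eq. (6b).) -/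
/-!
Comparing two decisions reduces to comparing the posterior ratio `q1 / q2` with a threshold:
decision 2 beats decision `j` iff `q1 / q2 ≤ (λ2j − λ22) / (λ12 − λ1j)`. The reject threshold
(`j = 3`) lies below the threshold for `j = 1`, so beating the reject decision already implies
beating decision 1.
-/

theorem risk_le_risk_iff_div_le {q1 q2 a1 a2 b1 b2 : ℝ} (hq2 : 0 < q2) (hab : b1 < a1) :
    a1 * q1 + a2 * q2 ≤ b1 * q1 + b2 * q2 ↔ q1 / q2 ≤ (b2 - a2) / (a1 - b1) := by
  rw [div_le_div_iff₀ hq2 (sub_pos.2 hab)]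
  constructor <;> intro h <;> linarith

theorem decide_y2_iff_general
    (q1 q2 : ℝ) (hq2 : 0 < q2)
    (l11 l12 l13 l21 l22 l23 : ℝ)
    (h1 : l11 < l13) (h2 : l13 < l12)
    (h4 : (l23 - l22) / (l12 - l13) < (l21 - l22) / (l12 - l11)) :
    (l12 * q1 + l22 * q2 ≤ l11 * q1 + l21 * q2 ∧
     l12 * q1 + l22 * q2 ≤ l13 * q1 + l23 * q2) ↔
    q1 / q2 ≤ (l23 - l22) / (l12 - l13) := by
  rw [risk_le_risk_iff_div_le hq2 (h1.trans h2), risk_le_risk_iff_div_le hq2 h2]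
  exact and_iff_right_of_imp fun h => h.trans h4.le

/-- Theorem 1, eq. (6b): under the regularity constraints on the cost terms,
decision 2 has conditional risk less than or equal to those of decision 1 and
the reject decision 3 iff the posterior ratio is at most `(λ23 − λ22)/(λ12 − λ13)`. -/
theorem decide_y2_iff
    (q1 q2 : ℝ) (hq1 : 0 < q1) (hq2 : 0 < q2) (hq : q1 + q2 = 1)
    (l11 l12 l13 l21 l22 l23 : ℝ)
    (h1 : l11 < l13) (h2 : l13 < l12)
    (h3 : 0 < (l23 - l22) / (l12 - l13))
    (h4 : (l23 - l22) / (l12 - l13) < (l21 - l22) / (l12 - l11))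
    (h5 : (l21 - l22) / (l12 - l11) < (l21 - l23) / (l13 - l11)) :
    (l12 * q1 + l22 * q2 ≤ l11 * q1 + l21 * q2 ∧
     l12 * q1 + l22 * q2 ≤ l13 * q1 + l23 * q2) ↔
    q1 / q2 ≤ (l23 - l22) / (l12 - l13) :=
  decide_y2_iff_general q1 q2 hq2 l11 l12 l13 l21 l22 l23 h1 h2 h4
end

section
/- Under the regularity constraints on the cost terms, the conditional risk of the reject decision 3 is strictly smaller than the conditional risks of both decision 1 and decision 2 if and only if (λ23 − λ22)/(λ12 − λ13) < q1/q2 < (λ21 − λ23)/(λ13 − λ11). (This is the 'decide y3' (reject) clause of the general decision rule for abstaining Bayesian classifiers, Theorem 1, eq. (6c).) -/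
theorem add_mul_lt_add_mul_iff_div_lt {a₁ a₂ b₁ b₂ q₁ q₂ : ℝ} (hq₂ : 0 < q₂) (hba : b₁ < a₁) :
    a₁ * q₁ + a₂ * q₂ < b₁ * q₁ + b₂ * q₂ ↔ q₁ / q₂ < (b₂ - a₂) / (a₁ - b₁) := by
  rw [div_lt_div_iff₀ hq₂ (sub_pos.2 hba)]
  constructor <;> intro h <;> linarith

theorem add_mul_lt_add_mul_iff_lt_div {a₁ a₂ b₁ b₂ q₁ q₂ : ℝ} (hq₂ : 0 < q₂) (hab : a₁ < b₁) :
    a₁ * q₁ + a₂ * q₂ < b₁ * q₁ + b₂ * q₂ ↔ (a₂ - b₂) / (b₁ - a₁) < q₁ / q₂ := by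
  rw [div_lt_div_iff₀ (sub_pos.2 hab) hq₂]
  constructor <;> intro h <;> linarith

theorem decide_y3_iff_general
    (q1 q2 : ℝ) (hq2 : 0 < q2)
    (l11 l12 l13 l21 l22 l23 : ℝ)
    (h1 : l11 < l13) (h2 : l13 < l12) :
    (l13 * q1 + l23 * q2 < l11 * q1 + l21 * q2 ∧
     l13 * q1 + l23 * q2 < l12 * q1 + l22 * q2) ↔
    ((l23 - l22) / (l12 - l13) < q1 / q2 ∧
     q1 / q2 < (l21 - l23) / (l13 - l11)) := by
  rw [add_mul_lt_add_mul_iff_div_lt hq2 h1, add_mul_lt_add_mul_iff_lt_div hq2 h2, and_comm]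

/-- Theorem 1, eq. (6c): under the regularity constraints on the cost terms,
the reject decision 3 has strictly smaller conditional risk than both
decision 1 and decision 2 iff the posterior ratio lies strictly between
`(λ23 − λ22)/(λ12 − λ13)` and `(λ21 − λ23)/(λ13 − λ11)`. -/
theorem decide_y3_iff
    (q1 q2 : ℝ) (hq1 : 0 < q1) (hq2 : 0 < q2) (hq : q1 + q2 = 1)
    (l11 l12 l13 l21 l22 l23 : ℝ)
    (h1 : l11 < l13) (h2 : l13 < l12)
    (h3 : 0 < (l23 - l22) / (l12 - l13))
    (h4 : (l23 - l22) / (l12 - l13) < (l21 - l22) / (l12 - l11))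
    (h5 : (l21 - l22) / (l12 - l11) < (l21 - l23) / (l13 - l11)) :
    (l13 * q1 + l23 * q2 < l11 * q1 + l21 * q2 ∧
     l13 * q1 + l23 * q2 < l12 * q1 + l22 * q2) ↔
    ((l23 - l22) / (l12 - l13) < q1 / q2 ∧
     q1 / q2 < (l21 - l23) / (l13 - l11)) :=
  decide_y3_iff_general q1 q2 hq2 l11 l12 l13 l21 l22 l23 h1 h2
end

section
/- Under the regularity constraints on the cost terms, the rejection thresholds T_r1 = (λ13 − λ11)/(λ13 − λ11 + λ21 − λ23) and T_r2 = (λ23 − λ22)/(λ12 − λ13 + λ23 − λ22) satisfy 0 < T_r1 < 1, 0 < T_r2 < 1, and T_r1 + T_r2 < 1. (The threshold constraint (6e) of Theorem 1, derived from the cost constraints (6d).) -/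
/-!
Write `a = λ13 - λ11`, `b = λ12 - λ13`, `c = λ23 - λ22`, `d = λ21 - λ23`, so that
`T_r1 = a / (a + d)`, `T_r2 = c / (c + b)` and `(λ21 - λ22) / (λ12 - λ11)` is the mediant
`(c + d) / (b + a)` of `c / b` and `d / a`. The mediant lies below `d / a` exactly when
`c / b < d / a`, which gives `d > 0`, and clearing denominators turns `T_r1 + T_r2 < 1`
into the same inequality `a c < b d`.
-/

section OrderedField

variable {K : Type*} [Field K] [LinearOrder K] [IsStrictOrderedRing K] {a b c d : K}

theorem div_lt_div_of_mediant_lt_right (ha : 0 < a) (hb : 0 < b)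
    (h : (c + d) / (b + a) < d / a) : c / b < d / a := by
  rw [div_lt_div_iff₀ (add_pos hb ha) ha] at h
  rw [div_lt_div_iff₀ hb ha]
  linarith

theorem div_add_lt_one (ha : 0 < a) (hb : 0 < b) : a / (a + b) < 1 :=
  (div_lt_one (add_pos ha hb)).2 (lt_add_of_pos_right a hb)

theorem div_add_add_div_add_lt_one (ha : 0 < a) (hb : 0 < b) (hc : 0 < c) (hd : 0 < d)
    (h : c / b < d / a) : a / (a + d) + c / (c + b) < 1 := by
  rw [div_lt_div_iff₀ hb ha] at h
  rw [div_add_div _ _ (add_pos ha hd).ne' (add_pos hc hb).ne',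
    div_lt_one (mul_pos (add_pos ha hd) (add_pos hc hb))]
  linarith

end OrderedField

theorem rejection_thresholds_constraints_general
    (l11 l12 l13 l21 l22 l23 : ℝ)
    (h1 : l11 < l13) (h2 : l13 < l12)
    (h3 : 0 < (l23 - l22) / (l12 - l13))
    (h5 : (l21 - l22) / (l12 - l11) < (l21 - l23) / (l13 - l11)) :
    0 < (l13 - l11) / (l13 - l11 + l21 - l23) ∧
    (l13 - l11) / (l13 - l11 + l21 - l23) < 1 ∧
    0 < (l23 - l22) / (l12 - l13 + l23 - l22) ∧
    (l23 - l22) / (l12 - l13 + l23 - l22) < 1 ∧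
    (l13 - l11) / (l13 - l11 + l21 - l23) +
      (l23 - l22) / (l12 - l13 + l23 - l22) < 1 := by
  have ha : 0 < l13 - l11 := sub_pos.2 h1
  have hb : 0 < l12 - l13 := sub_pos.2 h2
  have hc : 0 < l23 - l22 := (div_pos_iff_of_pos_right hb).1 h3
  have hlt : (l23 - l22) / (l12 - l13) < (l21 - l23) / (l13 - l11) :=
    div_lt_div_of_mediant_lt_right ha hb (by
      rwa [show l21 - l22 = (l23 - l22) + (l21 - l23) by ring,
        show l12 - l11 = (l12 - l13) + (l13 - l11) by ring] at h5)
  have hd : 0 < l21 - l23 := (div_pos_iff_of_pos_right ha).1 (h3.trans hlt)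
  rw [show l13 - l11 + l21 - l23 = (l13 - l11) + (l21 - l23) by ring,
    show l12 - l13 + l23 - l22 = (l23 - l22) + (l12 - l13) by ring]
  exact ⟨by positivity, div_add_lt_one ha hd, by positivity, div_add_lt_one hc hb,
    div_add_add_div_add_lt_one ha hb hc hd hlt⟩

/-- The threshold constraint (6e) of Theorem 1: under the cost constraints (6d),
the rejection thresholds of eq. (7) satisfy `0 < T_r1 < 1`, `0 < T_r2 < 1`
and `T_r1 + T_r2 < 1`. -/
theorem rejection_thresholds_constraints
    (l11 l12 l13 l21 l22 l23 : ℝ)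
    (h1 : l11 < l13) (h2 : l13 < l12)
    (h3 : 0 < (l23 - l22) / (l12 - l13))
    (h4 : (l23 - l22) / (l12 - l13) < (l21 - l22) / (l12 - l11))
    (h5 : (l21 - l22) / (l12 - l11) < (l21 - l23) / (l13 - l11)) :
    0 < (l13 - l11) / (l13 - l11 + l21 - l23) ∧
    (l13 - l11) / (l13 - l11 + l21 - l23) < 1 ∧
    0 < (l23 - l22) / (l12 - l13 + l23 - l22) ∧
    (l23 - l22) / (l12 - l13 + l23 - l22) < 1 ∧
    (l13 - l11) / (l13 - l11 + l21 - l23) +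
      (l23 - l22) / (l12 - l13 + l23 - l22) < 1 :=
  rejection_thresholds_constraints_general l11 l12 l13 l21 l22 l23 h1 h2 h3 h5
end

section
/- If the cost terms satisfy λ11 < λ13 < λ12 together with the chain of inequalities 0 < (λ23 − λ22)/(λ12 − λ13) < (λ21 − λ22)/(λ12 − λ11) < (λ21 − λ23)/(λ13 − λ11), then λ21 > λ23 > λ22. In other words, the general constraints (6d) imply Chow's intuitive cost ordering (3): a misclassification costs more than a rejection, which costs more than a correct classification, for class 2 as well. -/
/-- The general constraints (6d) imply Chow's intuitive cost ordering (3)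
for class 2: a misclassification costs more than a rejection, which costs
more than a correct classification. -/
theorem cost_ordering_of_constraints
    (l11 l12 l13 l21 l22 l23 : ℝ)
    (h1 : l11 < l13) (h2 : l13 < l12)
    (h3 : 0 < (l23 - l22) / (l12 - l13))
    (h4 : (l23 - l22) / (l12 - l13) < (l21 - l22) / (l12 - l11))
    (h5 : (l21 - l22) / (l12 - l11) < (l21 - l23) / (l13 - l11)) :
    l21 > l23 ∧ l23 > l22 := by
  have hl23 : l22 < l23 := sub_pos.1 <| (div_pos_iff_of_pos_right (sub_pos.2 h2)).1 h3
  have hl21 : l23 < l21 :=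
    sub_pos.1 <| (div_pos_iff_of_pos_right (sub_pos.2 h1)).1 (h3.trans (h4.trans h5))
  exact ⟨hl21, hl23⟩
end

section
/- Parameter redundancy of cost terms in abstaining classification (Theorem 2, eq. 30, corrected): let T_r1, T_r2 ∈ (0,1) with T_r1 + T_r2 < 1, and let λ21 be any real number with T_r2/(1 − T_r2) < λ21 < (1 − T_r1)/T_r1 (a nonempty open interval). Set λ11 = λ22 = 0, λ12 = 1, λ13 = T_r1·(T_r2·λ21 + T_r2 − λ21)/(T_r1 + T_r2 − 1), and λ23 = T_r2·(T_r1·λ21 + T_r1 − 1)/(T_r1 + T_r2 − 1). Then λ13 > 0, λ23 > 0, and the threshold formulas are reproduced independently of λ21: (λ13 − λ11)/(λ13 − λ11 + λ21 − λ23) = T_r1 and (λ23 − λ22)/(λ12 − λ13 + λ23 − λ22) = T_r2. Hence a one-parameter family of distinct cost matrices induces the same pair of rejection thresholds, i.e., the six cost terms are redundant parameters for determining the abstaining Bayesian classifier. -/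
/-!
Write `D = T₁ + T₂ - 1`, `A = T₂ λ₂₁ + T₂ - λ₂₁` and `B = T₁ λ₂₁ + T₁ - 1`, so that
`λ₁₃ = T₁ A / D` and `λ₂₃ = T₂ B / D`. The denominators of the two threshold formulas
collapse to `A / D` and `B / D`, which gives back `T₁` and `T₂`; the admissible interval
for `λ₂₁` says exactly that `A < 0` and `B < 0`, while `D < 0`, whence positivity.
-/

section CostTerms

variable {T₁ T₂ l : ℝ}

lemma lower_cost_bound_iff_neg (hT₂ : T₂ < 1) :
    T₂ / (1 - T₂) < l ↔ T₂ * l + T₂ - l < 0 := by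
  rw [div_lt_iff₀ (sub_pos.mpr hT₂)]
  constructor <;> intro h <;> linarith

lemma upper_cost_bound_iff_neg (hT₁ : 0 < T₁) :
    l < (1 - T₁) / T₁ ↔ T₁ * l + T₁ - 1 < 0 := by
  rw [lt_div_iff₀ hT₁]
  constructor <;> intro h <;> linarith

lemma first_threshold_denom_eq (hD : T₁ + T₂ - 1 ≠ 0) :
    T₁ * (T₂ * l + T₂ - l) / (T₁ + T₂ - 1) + l - T₂ * (T₁ * l + T₁ - 1) / (T₁ + T₂ - 1)
      = (T₂ * l + T₂ - l) / (T₁ + T₂ - 1) := by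
  field_simp
  ring

lemma second_threshold_denom_eq (hD : T₁ + T₂ - 1 ≠ 0) :
    1 - T₁ * (T₂ * l + T₂ - l) / (T₁ + T₂ - 1) + T₂ * (T₁ * l + T₁ - 1) / (T₁ + T₂ - 1)
      = (T₁ * l + T₁ - 1) / (T₁ + T₂ - 1) := by
  field_simp
  ring

end CostTerms

theorem cost_terms_redundant_general
    (Tr1 Tr2 l21 : ℝ)
    (h1 : 0 < Tr1) (h2 : 0 < Tr2)
    (hsum : Tr1 + Tr2 < 1)
    (hlo : Tr2 / (1 - Tr2) < l21) (hhi : l21 < (1 - Tr1) / Tr1) :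
    let l11 : ℝ := 0
    let l22 : ℝ := 0
    let l12 : ℝ := 1
    let l13 : ℝ := Tr1 * (Tr2 * l21 + Tr2 - l21) / (Tr1 + Tr2 - 1)
    let l23 : ℝ := Tr2 * (Tr1 * l21 + Tr1 - 1) / (Tr1 + Tr2 - 1)
    0 < l13 ∧ 0 < l23 ∧
    (l13 - l11) / (l13 - l11 + l21 - l23) = Tr1 ∧
    (l23 - l22) / (l12 - l13 + l23 - l22) = Tr2 := by
  intro l11 l22 l12 l13 l23
  have hD : Tr1 + Tr2 - 1 < 0 := by linarith
  have hA : Tr2 * l21 + Tr2 - l21 < 0 := (lower_cost_bound_iff_neg (by linarith)).mp hlo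
  have hB : Tr1 * l21 + Tr1 - 1 < 0 := (upper_cost_bound_iff_neg h1).mp hhi
  refine ⟨div_pos_of_neg_of_neg (mul_neg_of_pos_of_neg h1 hA) hD,
    div_pos_of_neg_of_neg (mul_neg_of_pos_of_neg h2 hB) hD, ?_, ?_⟩
  · simp only [l11, l13, l23, sub_zero]
    rw [first_threshold_denom_eq hD.ne, mul_div_assoc,
      mul_div_cancel_right₀ _ (div_ne_zero hA.ne hD.ne)]
  · simp only [l22, l12, l13, l23, sub_zero]
    rw [second_threshold_denom_eq hD.ne, mul_div_assoc,
      mul_div_cancel_right₀ _ (div_ne_zero hB.ne hD.ne)]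

/-- Parameter redundancy of cost terms in abstaining classification
(Theorem 2, eq. 30): for fixed thresholds `T_r1, T_r2` and any admissible
`λ21`, the displayed choices of `λ13`, `λ23` (with `λ11 = λ22 = 0`, `λ12 = 1`)
are positive and reproduce the same thresholds, independently of `λ21`. -/
theorem cost_terms_redundant
    (Tr1 Tr2 l21 : ℝ)
    (h1 : 0 < Tr1) (h1' : Tr1 < 1) (h2 : 0 < Tr2) (h2' : Tr2 < 1)
    (hsum : Tr1 + Tr2 < 1)
    (hlo : Tr2 / (1 - Tr2) < l21) (hhi : l21 < (1 - Tr1) / Tr1) :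
    let l11 : ℝ := 0
    let l22 : ℝ := 0
    let l12 : ℝ := 1
    let l13 : ℝ := Tr1 * (Tr2 * l21 + Tr2 - l21) / (Tr1 + Tr2 - 1)
    let l23 : ℝ := Tr2 * (Tr1 * l21 + Tr1 - 1) / (Tr1 + Tr2 - 1)
    0 < l13 ∧ 0 < l23 ∧
    (l13 - l11) / (l13 - l11 + l21 - l23) = Tr1 ∧
    (l23 - l22) / (l12 - l13 + l23 - l22) = Tr2 :=
  cost_terms_redundant_general Tr1 Tr2 l21 h1 h2 hsum hlo hhi
end

section
/- Theorem 3 (equal-variance case, asymptotic sacrifice of the rare class): fix σ > 0 and μ1 < μ2, and for p2 ∈ (0,1) let E(p2) = ∫_ℝ min((1 − p2)·φ_{μ1,σ}(x), p2·φ_{μ2,σ}(x)) dx be the Bayes error under zero-one costs with priors p1 = 1 − p2 and p2. Then E(p2) ≤ p2 for all p2 ∈ (0,1), and E(p2)/p2 → 1 as p2 → 0⁺; i.e., as the minority class becomes rare, the Bayesian classifier's error approaches the maximum Bayesian error p_min = p2, misclassifying essentially all rare-class patterns. -/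
/-
The bound `E(p) ≤ p` holds because the integrand is at most `p · φ_{μ₂,σ}`, of total mass `p`.
For the limit, `E(p)/p = ∫ min (c · φ_{μ₁,σ}, φ_{μ₂,σ})` with `c = (1 - p)/p → ∞`. Since
`φ_{μ₁,σ} > 0` everywhere, the integrand equals `φ_{μ₂,σ}(x)` once `c` is large, and dominated
convergence gives the limit `∫ φ_{μ₂,σ} = 1`.
-/

open MeasureTheory Filter

/-- Univariate Gaussian density with mean `μ` and standard deviation `σ`. -/
noncomputable def gaussPdf (μ σ x : ℝ) : ℝ :=
  (1 / (σ * Real.sqrt (2 * Real.pi))) * Real.exp (-((x - μ) ^ 2) / (2 * σ ^ 2))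

/-- Bayes error under zero-one costs for two Gaussian classes with common
standard deviation `σ` and priors `1 - p2`, `p2`. -/
noncomputable def bayesErrorEqVar (μ1 μ2 σ p2 : ℝ) : ℝ :=
  ∫ x : ℝ, min ((1 - p2) * gaussPdf μ1 σ x) (p2 * gaussPdf μ2 σ x)

open Topology

section MinIntegral

variable {α : Type*} [MeasurableSpace α] {μ : Measure α} {f g : α → ℝ}

theorem integral_min_le_integral_right (hf : 0 ≤ᵐ[μ] f) (hg : 0 ≤ᵐ[μ] g)
    (hg_int : Integrable g μ) : ∫ x, min (f x) (g x) ∂μ ≤ ∫ x, g x ∂μ :=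
  integral_mono_of_nonneg (by filter_upwards [hf, hg] with x hfx hgx using le_min hfx hgx)
    hg_int (ae_of_all _ fun _ => min_le_right _ _)

theorem tendsto_integral_min_const_mul_atTop (hf_meas : AEStronglyMeasurable f μ)
    (hf : ∀ᵐ x ∂μ, 0 < f x) (hg : 0 ≤ᵐ[μ] g) (hg_int : Integrable g μ) :
    Tendsto (fun c : ℝ => ∫ x, min (c * f x) (g x) ∂μ) atTop (𝓝 (∫ x, g x ∂μ)) := by
  refine tendsto_integral_filter_of_dominated_convergence g
    (Eventually.of_forall fun c => (hf_meas.const_mul c).inf hg_int.aestronglyMeasurable)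
    ?_ hg_int ?_
  · filter_upwards [eventually_ge_atTop 0] with c hc
    filter_upwards [hf, hg] with x hfx hgx
    rw [Real.norm_of_nonneg (le_min (by positivity) hgx)]
    exact min_le_right _ _
  · filter_upwards [hf] with x hfx
    refine tendsto_const_nhds.congr' ?_
    filter_upwards [eventually_ge_atTop (g x / f x)] with c hc
    rw [min_eq_right ((div_le_iff₀ hfx).mp hc)]

end MinIntegral

theorem gaussPdf_eq_gaussianPDFReal (μ : ℝ) {σ : ℝ} (hσ : 0 < σ) :
    gaussPdf μ σ = ProbabilityTheory.gaussianPDFReal μ (σ ^ 2).toNNReal := by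
  ext x
  rw [gaussPdf, ProbabilityTheory.gaussianPDFReal, Real.coe_toNNReal _ (sq_nonneg σ), one_div,
    Real.sqrt_mul' _ (sq_nonneg σ), Real.sqrt_sq hσ.le, mul_comm σ]

theorem gaussPdf_pos (μ : ℝ) {σ : ℝ} (hσ : 0 < σ) (x : ℝ) : 0 < gaussPdf μ σ x := by
  unfold gaussPdf
  positivity

theorem continuous_gaussPdf (μ σ : ℝ) : Continuous (gaussPdf μ σ) := by
  unfold gaussPdf
  fun_prop

theorem integrable_gaussPdf (μ : ℝ) {σ : ℝ} (hσ : 0 < σ) : Integrable (gaussPdf μ σ) := by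
  rw [gaussPdf_eq_gaussianPDFReal μ hσ]
  exact ProbabilityTheory.integrable_gaussianPDFReal μ _

theorem integral_gaussPdf (μ : ℝ) {σ : ℝ} (hσ : 0 < σ) : ∫ x, gaussPdf μ σ x = 1 := by
  rw [gaussPdf_eq_gaussianPDFReal μ hσ]
  exact ProbabilityTheory.integral_gaussianPDFReal_eq_one μ (by simpa using hσ.ne')

theorem bayesErrorEqVar_div_self (μ1 μ2 σ : ℝ) {p : ℝ} (hp : 0 < p) :
    bayesErrorEqVar μ1 μ2 σ p / p =
      ∫ x, min ((1 - p) / p * gaussPdf μ1 σ x) (gaussPdf μ2 σ x) := by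
  rw [bayesErrorEqVar, ← integral_div]
  congr 1 with x
  rw [← min_div_div_right hp.le, mul_div_right_comm, mul_div_cancel_left₀ _ hp.ne']

theorem tendsto_one_sub_div_self_nhdsGT_zero :
    Tendsto (fun p : ℝ => (1 - p) / p) (𝓝[>] 0) atTop := by
  refine (tendsto_atTop_add_const_right _ (-1) tendsto_inv_nhdsGT_zero).congr' ?_
  filter_upwards [self_mem_nhdsWithin] with p (hp : 0 < p)
  field_simp
  ring

theorem bayes_sacrifices_rare_class_equal_variance_general
    (μ1 μ2 σ : ℝ) (hσ : 0 < σ) :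
    (∀ p2 : ℝ, p2 ∈ Set.Ioo (0 : ℝ) 1 → bayesErrorEqVar μ1 μ2 σ p2 ≤ p2) ∧
    Tendsto (fun p2 => bayesErrorEqVar μ1 μ2 σ p2 / p2)
      (nhdsWithin 0 (Set.Ioi 0)) (nhds 1) := by
  have hf1 := gaussPdf_pos μ1 hσ
  have hf2 := gaussPdf_pos μ2 hσ
  have hf2_int := integrable_gaussPdf μ2 hσ
  constructor
  · rintro p ⟨hp0, hp1⟩
    calc bayesErrorEqVar μ1 μ2 σ p ≤ ∫ x, p * gaussPdf μ2 σ x :=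
          integral_min_le_integral_right
            (ae_of_all _ fun x => mul_nonneg (by linarith) (hf1 x).le)
            (ae_of_all _ fun x => mul_nonneg hp0.le (hf2 x).le) (hf2_int.const_mul p)
      _ = p := by rw [integral_const_mul, integral_gaussPdf μ2 hσ, mul_one]
  · have hlim := (tendsto_integral_min_const_mul_atTop
      (continuous_gaussPdf μ1 σ).aestronglyMeasurable (ae_of_all _ hf1)
      (ae_of_all _ fun x => (hf2 x).le) hf2_int).comp tendsto_one_sub_div_self_nhdsGT_zero
    rw [integral_gaussPdf μ2 hσ] at hlim
    refine hlim.congr' ?_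
    filter_upwards [self_mem_nhdsWithin] with p (hp : 0 < p)
    exact (bayesErrorEqVar_div_self μ1 μ2 σ hp).symm

/-- Theorem 3 (equal-variance case): the Bayes error is at most the minority
prior `p2`, and as the minority class becomes rare the error asymptotically
equals `p2`, i.e. essentially all rare-class patterns are misclassified. -/
theorem bayes_sacrifices_rare_class_equal_variance
    (μ1 μ2 σ : ℝ) (hσ : 0 < σ) (hμ : μ1 < μ2) :
    (∀ p2 : ℝ, p2 ∈ Set.Ioo (0 : ℝ) 1 → bayesErrorEqVar μ1 μ2 σ p2 ≤ p2) ∧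
    Tendsto (fun p2 => bayesErrorEqVar μ1 μ2 σ p2 / p2)
      (nhdsWithin 0 (Set.Ioi 0)) (nhds 1) :=
  bayes_sacrifices_rare_class_equal_variance_general μ1 μ2 σ hσ
end

section
/- Theorem 3 (unequal-variance case, majority-taking-all): let μ1, μ2 be real and σ1 > σ2 > 0. Then there exists p* > 0 such that for every p2 ∈ (0, p*), the inequality (1 − p2)·φ_{μ1,σ1}(x) > p2·φ_{μ2,σ2}(x) holds for all x ∈ ℝ (zero cross-over points of the posterior curves); consequently the zero-one-cost Bayesian classifier assigns every pattern to the majority class 1, and the Bayes error ∫_ℝ min((1 − p2)·φ_{μ1,σ1}(x), p2·φ_{μ2,σ2}(x)) dx equals p2, the entire probability of the rare class. -/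
/-!
When `σ₂ < σ₁`, the wider Gaussian has the heavier tails: the log-ratio
`log (φ_{μ₂,σ₂} / φ_{μ₁,σ₁})` is a quadratic with negative leading coefficient, hence bounded
above, so `φ_{μ₂,σ₂} ≤ C · φ_{μ₁,σ₁}` for a constant `C`. Any prior `p₂ < 1 / (1 + C)` then
gives `p₂ φ_{μ₂,σ₂} < (1 - p₂) φ_{μ₁,σ₁}` everywhere, so the minimum in the Bayes error is
always the rare-class term, whose integral is `p₂`.
-/

open MeasureTheory

namespace gaussPdf

lemma pos (μ : ℝ) {σ : ℝ} (hσ : 0 < σ) (x : ℝ) : 0 < gaussPdf μ σ x := by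
  unfold gaussPdf
  positivity

lemma eq_gaussianPDFReal (μ : ℝ) {σ : ℝ} (hσ : 0 < σ) (x : ℝ) :
    gaussPdf μ σ x = ProbabilityTheory.gaussianPDFReal μ ⟨σ ^ 2, sq_nonneg σ⟩ x := by
  have hsqrt : Real.sqrt (2 * Real.pi * σ ^ 2) = σ * Real.sqrt (2 * Real.pi) := by
    rw [Real.sqrt_mul (by positivity), Real.sqrt_sq hσ.le, mul_comm]
  change _ = (Real.sqrt (2 * Real.pi * σ ^ 2))⁻¹ * Real.exp (-(x - μ) ^ 2 / (2 * σ ^ 2))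
  rw [hsqrt, gaussPdf, one_div, neg_div]

lemma integral_eq_one (μ : ℝ) {σ : ℝ} (hσ : 0 < σ) : ∫ x, gaussPdf μ σ x = 1 := by
  have hvar : (⟨σ ^ 2, sq_nonneg σ⟩ : NNReal) ≠ 0 := fun h =>
    (pow_pos hσ 2).ne' (congrArg NNReal.toReal h)
  simp_rw [eq_gaussianPDFReal μ hσ]
  exact ProbabilityTheory.integral_gaussianPDFReal_eq_one μ hvar

end gaussPdf

lemma sq_div_sub_sq_div_le {s t : ℝ} (hs : 0 < s) (hst : s < t) (a b x : ℝ) :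
    (x - a) ^ 2 / t - (x - b) ^ 2 / s ≤ (a - b) ^ 2 / (t - s) := by
  have ht : 0 < t := hs.trans hst
  have hts : 0 < t - s := sub_pos.mpr hst
  rw [div_sub_div _ _ ht.ne' hs.ne', div_le_div_iff₀ (by positivity) hts]
  -- multiplied out, the gap is `((x - b) * (t - s) - (b - a) * s) ^ 2`
  nlinarith [sq_nonneg ((x - b) * (t - s) - (b - a) * s)]

lemma gaussPdf_le_mul_gaussPdf_of_lt (μ₁ μ₂ : ℝ) {σ₁ σ₂ : ℝ} (hσ₂ : 0 < σ₂) (hσ : σ₂ < σ₁)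
    (x : ℝ) :
    gaussPdf μ₂ σ₂ x ≤
      σ₁ / σ₂ * Real.exp ((μ₁ - μ₂) ^ 2 / (2 * σ₁ ^ 2 - 2 * σ₂ ^ 2)) * gaussPdf μ₁ σ₁ x := by
  have hσ₁ : 0 < σ₁ := hσ₂.trans hσ
  have hexponent := sq_div_sub_sq_div_le (by positivity : 0 < 2 * σ₂ ^ 2)
    (by gcongr : 2 * σ₂ ^ 2 < 2 * σ₁ ^ 2) μ₁ μ₂ x
  calc gaussPdf μ₂ σ₂ x
      ≤ 1 / (σ₂ * Real.sqrt (2 * Real.pi)) * Real.exp ((μ₁ - μ₂) ^ 2 / (2 * σ₁ ^ 2 - 2 * σ₂ ^ 2)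
          + -((x - μ₁) ^ 2) / (2 * σ₁ ^ 2)) := by
        unfold gaussPdf
        gcongr
        rw [neg_div, neg_div]
        linarith
    _ = _ := by
        rw [Real.exp_add, gaussPdf]
        field_simp

lemma mul_lt_one_sub_mul_of_le_mul {a b C p : ℝ} (ha : 0 < a) (hb : b ≤ C * a) (hp : 0 ≤ p)
    (hpC : p * (1 + C) < 1) : p * b < (1 - p) * a := by
  nlinarith [mul_le_mul_of_nonneg_left hb hp]

/-- Theorem 3 (unequal-variance case, majority-taking-all): if `σ1 > σ2`, then
for all sufficiently small priors `p2` of class 2, the weighted density of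
class 1 dominates everywhere (zero cross-over points), so the zero-one-cost
Bayesian classifier assigns everything to class 1 and its Bayes error equals
the whole rare-class probability `p2`. -/
theorem bayes_majority_taking_all_unequal_variance
    (μ1 μ2 σ1 σ2 : ℝ) (hσ2 : 0 < σ2) (hσ : σ2 < σ1) :
    ∃ pstar : ℝ, 0 < pstar ∧ ∀ p2 : ℝ, p2 ∈ Set.Ioo (0 : ℝ) pstar →
      (∀ x : ℝ, p2 * gaussPdf μ2 σ2 x < (1 - p2) * gaussPdf μ1 σ1 x) ∧
      (∫ x : ℝ, min ((1 - p2) * gaussPdf μ1 σ1 x) (p2 * gaussPdf μ2 σ2 x))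
        = p2 := by
  set C := σ1 / σ2 * Real.exp ((μ1 - μ2) ^ 2 / (2 * σ1 ^ 2 - 2 * σ2 ^ 2))
  have hσ1 : 0 < σ1 := hσ2.trans hσ
  have hC : 0 < 1 + C := by positivity
  refine ⟨1 / (1 + C), by positivity, fun p2 ⟨hp2, hp2C⟩ => ?_⟩
  have hdom (x : ℝ) : p2 * gaussPdf μ2 σ2 x < (1 - p2) * gaussPdf μ1 σ1 x :=
    mul_lt_one_sub_mul_of_le_mul (gaussPdf.pos μ1 hσ1 x)
      (gaussPdf_le_mul_gaussPdf_of_lt μ1 μ2 hσ2 hσ x) hp2.le ((lt_div_iff₀ hC).mp hp2C)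
  refine ⟨hdom, ?_⟩
  simp_rw [min_eq_right (hdom _).le]
  rw [integral_const_mul, gaussPdf.integral_eq_one μ2 hσ2, mul_one]
end

section
/- Modified upper bound on the Bayesian error (Appendix B, eq. B5): let p(t, y) be a joint probability mass function on {1,2} × F, with F a finite set, with marginals p(t=1) = p1 > 0, p(t=2) = p2 > 0, and p(y) > 0 for all y ∈ F. The Bayes error of the optimal decision based on Y is E* = Σ_{y ∈ F} min(p(1,y), p(2,y)). Then E* ≤ min(p1, p2, H(T|Y)/2), where H(T|Y) is the conditional entropy of T given Y in bits; i.e., the Kovalevskij upper bound H(T|Y)/2 can be tightened by the minority prior min(p1, p2). -/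
/-!
Pointwise in `y`, the bound `min(a, b) ≤ -(a log₂ (a/s) + b log₂ (b/s)) / 2` with `s = a + b` is
`s` times `2 min(q, 1 - q) ≤ h₂(q)` for `q = a/s`, which holds because the binary entropy `h₂` is
concave, vanishes at `0` and equals `1` bit at `1/2`, so it lies above the tent through these
points. Summing over `y` gives `E* ≤ H(T|Y)/2`, and `E* ≤ pₜ` is immediate from `min ≤ p(t, y)`.
-/

open Finset Real

lemma two_mul_mul_log_two_le_binEntropy {r : ℝ} (hr0 : 0 ≤ r) (hr : r ≤ 2⁻¹) :
    2 * r * log 2 ≤ binEntropy r := by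
  have hchord := strictConcave_binEntropy.concaveOn.2
    (show (0 : ℝ) ∈ Set.Icc 0 1 by norm_num) (show (2 : ℝ)⁻¹ ∈ Set.Icc 0 1 by norm_num)
    (show 0 ≤ 1 - 2 * r by linarith) (show 0 ≤ 2 * r by linarith) (by ring)
  simp only [smul_eq_mul, binEntropy_zero, binEntropy_two_inv, mul_zero, zero_add] at hchord
  rwa [show 2 * r * 2⁻¹ = r by ring] at hchord

lemma two_mul_min_mul_log_two_le_binEntropy {q : ℝ} (h0 : 0 ≤ q) (h1 : q ≤ 1) :
    2 * min q (1 - q) * log 2 ≤ binEntropy q := by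
  rcases le_total q 2⁻¹ with h | h
  · rw [min_eq_left (by linarith)]
    exact two_mul_mul_log_two_le_binEntropy h0 h
  · rw [min_eq_right (by linarith), ← binEntropy_one_sub q]
    exact two_mul_mul_log_two_le_binEntropy (by linarith) (by linarith)

lemma mul_binEntropy_div_add {a b : ℝ} (hs : 0 < a + b) :
    (a + b) * binEntropy (a / (a + b)) = -(a * log (a / (a + b)) + b * log (b / (a + b))) := by
  have hcompl : 1 - a / (a + b) = b / (a + b) := by field_simp; ring
  rw [binEntropy, hcompl, log_inv, log_inv]
  field_simp
  ring

lemma min_le_neg_mul_logb_add_mul_logb_div_two {a b : ℝ} (ha : 0 ≤ a) (hb : 0 ≤ b) :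
    min a b ≤ -(a * logb 2 (a / (a + b)) + b * logb 2 (b / (a + b))) / 2 := by
  rcases (add_nonneg ha hb).eq_or_lt with hs | hs
  · obtain ⟨rfl, rfl⟩ : a = 0 ∧ b = 0 := ⟨by linarith, by linarith⟩
    simp
  have hq1 : a / (a + b) ≤ 1 := (div_le_one hs).2 (by linarith)
  have hbound := two_mul_min_mul_log_two_le_binEntropy (div_nonneg ha hs.le) hq1
  have hcompl : 1 - a / (a + b) = b / (a + b) := by field_simp; ring
  rw [hcompl, min_div_div_right hs.le] at hbound
  have hscaled := mul_le_mul_of_nonneg_left hbound hs.le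
  rw [mul_binEntropy_div_add hs,
    show (a + b) * (2 * (min a b / (a + b)) * log 2) = 2 * min a b * log 2 by field_simp]
    at hscaled
  have hlog2 : 0 < log 2 := log_pos one_lt_two
  rw [logb, logb]
  field_simp
  linarith

theorem modified_upper_bound_bayes_error_general
    {F : Type*} [Fintype F]
    (p : Fin 2 → F → ℝ)
    (hnn : ∀ t y, 0 ≤ p t y) :
    (∑ y : F, min (p 0 y) (p 1 y)) ≤
      min (∑ y : F, p 0 y)
        (min (∑ y : F, p 1 y)
          ((-(∑ y : F, (p 0 y * Real.logb 2 (p 0 y / (p 0 y + p 1 y)) +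
                p 1 y * Real.logb 2 (p 1 y / (p 0 y + p 1 y))))) / 2)) := by
  refine le_min (sum_le_sum fun y _ => min_le_left _ _)
    (le_min (sum_le_sum fun y _ => min_le_right _ _) ?_)
  calc (∑ y : F, min (p 0 y) (p 1 y))
      ≤ ∑ y : F, -(p 0 y * logb 2 (p 0 y / (p 0 y + p 1 y)) +
          p 1 y * logb 2 (p 1 y / (p 0 y + p 1 y))) / 2 :=
        sum_le_sum fun y _ => min_le_neg_mul_logb_add_mul_logb_div_two (hnn 0 y) (hnn 1 y)
    _ = _ := by rw [← sum_div, sum_neg_distrib]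

/-- Modified upper bound on the Bayesian error (Appendix B, eq. B5): for a
joint pmf `p(t, y)` on `{1,2} × F` with positive marginals, the Bayes error
`E* = Σ_y min(p(1,y), p(2,y))` is at most `min(p1, p2, H(T|Y)/2)`. -/
theorem modified_upper_bound_bayes_error
    {F : Type*} [Fintype F]
    (p : Fin 2 → F → ℝ)
    (hnn : ∀ t y, 0 ≤ p t y)
    (hsum : (∑ y : F, p 0 y) + (∑ y : F, p 1 y) = 1)
    (hp1 : 0 < ∑ y : F, p 0 y) (hp2 : 0 < ∑ y : F, p 1 y)
    (hpy : ∀ y : F, 0 < p 0 y + p 1 y) :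
    (∑ y : F, min (p 0 y) (p 1 y)) ≤
      min (∑ y : F, p 0 y)
        (min (∑ y : F, p 1 y)
          ((-(∑ y : F, (p 0 y * Real.logb 2 (p 0 y / (p 0 y + p 1 y)) +
                p 1 y * Real.logb 2 (p 1 y / (p 0 y + p 1 y))))) / 2)) :=
  modified_upper_bound_bayes_error_general p hnn
end
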